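/- arXiv:2307.16587 — 2 statements merged into one kernel-verified Lean document; each statement's English description precedes it below -/
import Mathlib

section
/- For any entire function f of two complex variables and any natural number ℓ, the ℓ-th mixed derivative ∂^{2ℓ}/(∂ζ₁^ℓ ∂ζ₂^ℓ) of the function (ζ₁-ζ₂)^ℓ f(ζ₁,ζ₂), evaluated at ζ₁ = ζ₂ = ζ, equals (-1)^ℓ ℓ! (R_ℓ f)(ζ), where (R_ℓ f)(ζ) = Σ_{j=0}^{ℓ} (-1)^j (ℓ choose j)² ∂^ℓ f/(∂ζ₁^{ℓ-j} ∂ζ₂^j) evaluated at ζ₁ = ζ₂ = ζ. -/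
open Finset

section RCHelpers

open Metric Real

lemma entire_iteratedDeriv {f : ℂ → ℂ} (hf : Differentiable ℂ f) (m : ℕ) :
    Differentiable ℂ (iteratedDeriv m f) :=
  (hf.contDiff : ContDiff ℂ ((m + 1 : ℕ) : WithTop ℕ∞) f).differentiable_iteratedDeriv m
    (by exact_mod_cast lt_add_one m)

lemma pascal_sum (P : ℕ → ℕ → ℂ) (n : ℕ) :
    ∑ i ∈ range (n + 1), (n.choose i : ℂ) * (P (i + 1) (n - i) + P i (n - i + 1)) =
      ∑ i ∈ range (n + 2), ((n + 1).choose i : ℂ) * P i (n + 1 - i) := by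
  have key : ∀ i ∈ range (n + 1), (n.choose i : ℂ) * (P (i + 1) (n - i) + P i (n - i + 1)) =
      (n.choose i : ℂ) * P (i + 1) (n - i) + (n.choose i : ℂ) * P i (n + 1 - i) := by
    intro i hi
    have h : n - i + 1 = n + 1 - i := by have := mem_range.mp hi; omega
    rw [h]; ring
  rw [sum_congr rfl key, sum_add_distrib]
  rw [sum_range_succ' (fun i => ((n + 1).choose i : ℂ) * P i (n + 1 - i)) (n + 1)]
  simp only [Nat.succ_sub_succ, Nat.choose_succ_succ' n, Nat.choose_zero_right,
    Nat.cast_add, Nat.cast_one, Nat.sub_zero, one_mul, add_mul]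
  rw [sum_add_distrib]
  have h2 : ∑ i ∈ range (n + 1), (n.choose i : ℂ) * P i (n + 1 - i) =
      ∑ i ∈ range (n + 1), (n.choose (i + 1) : ℂ) * P (i + 1) (n - i) + P 0 (n + 1) := by
    rw [sum_range_succ' (fun i => (n.choose i : ℂ) * P i (n + 1 - i)) n]
    rw [sum_range_succ (fun i => (n.choose (i + 1) : ℂ) * P (i + 1) (n - i)) n]
    simp [Nat.succ_sub_succ, Nat.choose_succ_self]
  rw [h2]; ring

lemma leibniz (f g : ℂ → ℂ) (hf : Differentiable ℂ f) (hg : Differentiable ℂ g) (n : ℕ) :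
    iteratedDeriv n (fun y => f y * g y) =
      fun x => ∑ i ∈ range (n + 1),
        (n.choose i : ℂ) * (iteratedDeriv i f x * iteratedDeriv (n - i) g x) := by
  induction n with
  | zero => funext x; simp
  | succ n ih =>
      funext x
      rw [iteratedDeriv_succ, ih]
      rw [deriv_fun_sum (fun i _ => by
        exact (differentiableAt_const _).mul
          (((entire_iteratedDeriv hf i).differentiableAt).mul
            ((entire_iteratedDeriv hg (n - i)).differentiableAt)))]
      have e : ∀ i ∈ range (n + 1),
          deriv (fun y => (n.choose i : ℂ) * (iteratedDeriv i f y * iteratedDeriv (n - i) g y)) x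
          = (n.choose i : ℂ) * (iteratedDeriv (i + 1) f x * iteratedDeriv (n - i) g x +
              iteratedDeriv i f x * iteratedDeriv (n - i + 1) g x) := by
        intro i _
        rw [deriv_const_mul (d := fun y => iteratedDeriv i f y * iteratedDeriv (n - i) g y) _ (((entire_iteratedDeriv hf i).differentiableAt).mul
            ((entire_iteratedDeriv hg (n - i)).differentiableAt)),
          deriv_fun_mul ((entire_iteratedDeriv hf i).differentiableAt)
            ((entire_iteratedDeriv hg (n - i)).differentiableAt),
          ← iteratedDeriv_succ, ← iteratedDeriv_succ]
      rw [sum_congr rfl e]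
      exact pascal_sum (fun i k => iteratedDeriv i f x * iteratedDeriv k g x) n

lemma iteratedDeriv_const_sub_pow (a : ℂ) (m : ℕ) : ∀ j,
    iteratedDeriv j (fun b => (a - b) ^ m) =
      fun b => (-1 : ℂ) ^ j * (m.descFactorial j : ℂ) * (a - b) ^ (m - j)
  | 0 => by funext b; simp
  | (j + 1) => by
      funext b
      rw [iteratedDeriv_succ, iteratedDeriv_const_sub_pow a m j]
      rcases le_or_gt m j with h | h
      · have h0 : m - j = 0 := by omega
        have h1 : m.descFactorial (j + 1) = 0 := Nat.descFactorial_eq_zero_iff_lt.mpr (by omega)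
        simp [h0, h1]
      · have hd : HasDerivAt
            (fun b => (-1 : ℂ) ^ j * (m.descFactorial j : ℂ) * (a - b) ^ (m - j))
            ((-1 : ℂ) ^ j * (m.descFactorial j : ℂ) *
              (((m - j : ℕ) : ℂ) * (a - b) ^ (m - j - 1) * (-1))) b :=
          (((hasDerivAt_id b).const_sub a).pow (m - j)).const_mul _
        rw [hd.deriv, Nat.descFactorial_succ, Nat.sub_sub]
        push_cast
        ring

lemma iteratedDeriv_sub_const_pow (c : ℂ) (m : ℕ) : ∀ j,
    iteratedDeriv j (fun a => (a - c) ^ m) =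
      fun a => (m.descFactorial j : ℂ) * (a - c) ^ (m - j)
  | 0 => by funext a; simp
  | (j + 1) => by
      funext a
      rw [iteratedDeriv_succ, iteratedDeriv_sub_const_pow c m j]
      rcases le_or_gt m j with h | h
      · have h0 : m - j = 0 := by omega
        have h1 : m.descFactorial (j + 1) = 0 := Nat.descFactorial_eq_zero_iff_lt.mpr (by omega)
        simp [h0, h1]
      · have hd : HasDerivAt
            (fun a => (m.descFactorial j : ℂ) * (a - c) ^ (m - j))
            ((m.descFactorial j : ℂ) *
              (((m - j : ℕ) : ℂ) * (a - c) ^ (m - j - 1) * 1)) a :=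
          (((hasDerivAt_id a).sub_const c).pow (m - j)).const_mul _
        rw [hd.deriv, Nat.descFactorial_succ, Nat.sub_sub]
        push_cast
        ring

lemma iteratedDeriv_cmul {g : ℂ → ℂ} (hg : Differentiable ℂ g) (c : ℂ) (n : ℕ) :
    iteratedDeriv n (fun x => c * g x) = fun x => c * iteratedDeriv n g x := by
  induction n with
  | zero => simp
  | succ n ih =>
      funext x
      rw [iteratedDeriv_succ, ih,
        deriv_const_mul _ (entire_iteratedDeriv hg n).differentiableAt, ← iteratedDeriv_succ]

lemma iteratedDeriv_fun_sum' {ι : Type*} (s : Finset ι) (F : ι → ℂ → ℂ)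
    (h : ∀ i ∈ s, Differentiable ℂ (F i)) (n : ℕ) :
    iteratedDeriv n (fun x => ∑ i ∈ s, F i x) = fun x => ∑ i ∈ s, iteratedDeriv n (F i) x := by
  induction n with
  | zero => simp
  | succ n ih =>
      funext x
      rw [iteratedDeriv_succ, ih,
        deriv_fun_sum (fun i hi => (entire_iteratedDeriv (h i hi) n).differentiableAt)]
      exact sum_congr rfl fun i hi => congrFun (iteratedDeriv_succ).symm x

lemma collapse (g : ℂ → ℂ) (hg : Differentiable ℂ g) (c : ℂ) (m n : ℕ) (hmn : m ≤ n) :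
    iteratedDeriv n (fun a => (a - c) ^ m * g a) c =
      (n.choose m : ℂ) * (m.factorial : ℂ) * iteratedDeriv (n - m) g c := by
  have hpoly : Differentiable ℂ (fun a : ℂ => (a - c) ^ m) :=
    (differentiable_id.sub_const c).pow m
  rw [leibniz _ _ hpoly hg n]; beta_reduce
  rw [Finset.sum_eq_single_of_mem m (mem_range.mpr (by omega))]
  · rw [iteratedDeriv_sub_const_pow]
    simp [Nat.descFactorial_self]
    ring
  · intro i hi hne
    rw [iteratedDeriv_sub_const_pow]
    rcases lt_or_gt_of_ne hne with h | h
    · simp [sub_self, zero_pow (show m - i ≠ 0 by omega)]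
    · simp [Nat.descFactorial_eq_zero_iff_lt.mpr h]

open Metric Real in
lemma cauchy_deriv_bound {g : ℂ → ℂ} (hg : Differentiable ℂ g) {M : ℝ} (a : ℂ)
    (hM : ∀ x ∈ sphere a (1 : ℝ), ‖g x‖ ≤ M) : ‖deriv g a‖ ≤ M := by
  have hps := hg.hasFPowerSeriesOnBall a (R := 1) one_pos
  have h1 : deriv g a = (cauchyPowerSeries g a (↑(1 : NNReal)) 1) fun _ => 1 :=
    hps.hasFPowerSeriesAt.deriv
  have hmem : ∀ θ : ℝ, circleMap a 1 θ ∈ sphere a (1 : ℝ) :=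
    fun θ => circleMap_mem_sphere a zero_le_one θ
  have hle := (cauchyPowerSeries g a (↑(1 : NNReal)) 1).le_opNorm (fun _ => (1 : ℂ))
  have hnorm := norm_cauchyPowerSeries_le g a (↑(1 : NNReal)) 1
  have hint : ∫ θ : ℝ in (0)..(2 * π), ‖g (circleMap a 1 θ)‖ ≤ 2 * π * M := by
    have := intervalIntegral.integral_mono_on (a := 0) (b := 2 * π)
      (μ := MeasureTheory.volume) (by positivity)
      (Continuous.intervalIntegrable
        ((hg.continuous.comp (continuous_circleMap a 1)).norm) 0 (2 * π))
      (intervalIntegrable_const (c := M))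
      (fun θ _ => hM _ (hmem θ))
    simpa using this
  rw [h1]
  calc ‖(cauchyPowerSeries g a (↑(1 : NNReal)) 1) fun _ => 1‖
      ≤ ‖cauchyPowerSeries g a (↑(1 : NNReal)) 1‖ := by simpa using hle
    _ ≤ ((2 * π)⁻¹ * ∫ θ : ℝ in (0)..(2 * π), ‖g (circleMap a 1 θ)‖) * |(1:ℝ)|⁻¹ ^ 1 := by
        simpa using hnorm
    _ ≤ M := by
        simp only [abs_one, inv_one, one_pow, mul_one]
        calc (2 * π)⁻¹ * ∫ θ : ℝ in (0)..(2 * π), ‖g (circleMap a 1 θ)‖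
            ≤ (2 * π)⁻¹ * (2 * π * M) :=
              mul_le_mul_of_nonneg_left hint (by positivity)
          _ = M := by field_simp

lemma slice_fst {f : ℂ → ℂ → ℂ} (hf : Differentiable ℂ (fun p : ℂ × ℂ => f p.1 p.2)) (w : ℂ) :
    Differentiable ℂ (fun x => f x w) :=
  hf.comp (differentiable_id.prodMk (differentiable_const w))

lemma slice_snd {f : ℂ → ℂ → ℂ} (hf : Differentiable ℂ (fun p : ℂ × ℂ => f p.1 p.2)) (a : ℂ) :
    Differentiable ℂ (f a) :=
  hf.comp ((differentiable_const a).prodMk differentiable_id)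

lemma deriv_slice_eq_fderiv {f : ℂ → ℂ → ℂ}
    (hf : Differentiable ℂ (fun p : ℂ × ℂ => f p.1 p.2)) (x w : ℂ) :
    deriv (fun y => f y w) x = fderiv ℂ (fun p : ℂ × ℂ => f p.1 p.2) (x, w) (1, 0) := by
  have h2 : HasDerivAt (fun y : ℂ => (y, w)) ((1 : ℂ), (0 : ℂ)) x :=
    (hasDerivAt_id x).prodMk (hasDerivAt_const x w)
  have h1 := (hf (x, w)).hasFDerivAt
  exact (h1.comp_hasDerivAt x h2).deriv

lemma circle_integral_param_diff {f : ℂ → ℂ → ℂ}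
    (hf : Differentiable ℂ (fun p : ℂ × ℂ => f p.1 p.2)) (q : ℕ) (z : ℂ) :
    Differentiable ℂ (fun a => ∮ w in C(z, (1:ℝ)), ((1:ℂ) / (w - z)) ^ q • (w - z)⁻¹ • f a w) := by
  intro a₀
  obtain ⟨M, hM⟩ :=
    ((isCompact_closedBall a₀ 2).prod (isCompact_sphere z 1)).exists_bound_of_continuousOn
      (hf.continuous.continuousOn)
  have hne : ∀ θ : ℝ, circleMap z 1 θ - z ≠ 0 := by
    intro θ
    rw [circleMap_sub_center]
    exact circleMap_ne_center one_ne_zero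
  set c1 : ℝ → ℂ := fun θ =>
    deriv (circleMap z 1) θ * (((1:ℂ) / (circleMap z 1 θ - z)) ^ q * (circleMap z 1 θ - z)⁻¹)
    with hc1
  have hc1c : Continuous c1 := by
    rw [hc1]
    simp only [deriv_circleMap]
    exact ((continuous_circleMap 0 1).mul continuous_const).mul
      (((continuous_const.div ((continuous_circleMap z 1).sub continuous_const) hne).pow q).mul
        (((continuous_circleMap z 1).sub continuous_const).inv₀ hne))
  have hc1n : ∀ θ, ‖c1 θ‖ = 1 := by
    intro θ
    rw [hc1]
    simp [deriv_circleMap, norm_mul, norm_pow, norm_div, norm_inv, circleMap_sub_center,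
      norm_circleMap_zero, Complex.norm_I]
  have hrw : (fun a => ∮ w in C(z, (1:ℝ)), ((1:ℂ) / (w - z)) ^ q • (w - z)⁻¹ • f a w) =
      fun a => ∫ θ in (0)..(2 * π), c1 θ * f a (circleMap z 1 θ) := by
    funext a
    simp only [circleIntegral, smul_eq_mul, hc1]
    apply intervalIntegral.integral_congr
    intro θ _
    ring
  rw [hrw]
  set D : ℂ → ℝ → ℂ := fun x θ => deriv (fun y => f y (circleMap z 1 θ)) x with hD
  have key := (intervalIntegral.hasDerivAt_integral_of_dominated_loc_of_deriv_le (s := Metric.ball a₀ 1)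
      (μ := MeasureTheory.volume) (a := 0) (b := 2 * π) (x₀ := a₀)
      (bound := fun _ => M)
      (F := fun x θ => c1 θ * f x (circleMap z 1 θ))
      (F' := fun x θ => c1 θ * D x θ)
      (Metric.ball_mem_nhds a₀ one_pos) ?_ ?_ ?_ ?_ ?_ ?_).2
  · exact key.differentiableAt
  · filter_upwards with x
    exact (hc1c.mul
      ((slice_snd hf x).continuous.comp (continuous_circleMap z 1))).aestronglyMeasurable
  · exact Continuous.intervalIntegrable
      (hc1c.mul ((slice_snd hf a₀).continuous.comp (continuous_circleMap z 1))) 0 (2 * π)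
  · apply Measurable.aestronglyMeasurable
    have hDm : Measurable (fun θ : ℝ => D a₀ θ) := by
      have h : (fun θ : ℝ => D a₀ θ) =
          fun θ => (ContinuousLinearMap.apply ℂ ℂ ((1:ℂ), (0:ℂ)))
            (fderiv ℂ (fun p : ℂ × ℂ => f p.1 p.2) (a₀, circleMap z 1 θ)) := by
        funext θ
        simp only [hD, ContinuousLinearMap.apply_apply]
        exact deriv_slice_eq_fderiv hf a₀ (circleMap z 1 θ)
      rw [h]
      exact (ContinuousLinearMap.apply ℂ ℂ ((1:ℂ), (0:ℂ))).continuous.measurable.comp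
        ((measurable_fderiv ℂ _).comp
          (measurable_const.prodMk (continuous_circleMap z 1).measurable))
    exact hc1c.measurable.mul hDm
  · filter_upwards with θ _
    intro x hx
    have hb : ‖D x θ‖ ≤ M := by
      apply cauchy_deriv_bound (slice_fst hf (circleMap z 1 θ)) x
      intro y hy
      refine hM (y, circleMap z 1 θ) (Set.mk_mem_prod ?_ ?_)
      · have h1 : dist y x = 1 := mem_sphere.mp hy
        have h2 : dist x a₀ < 1 := mem_ball.mp hx
        have h3 : dist y a₀ ≤ dist y x + dist x a₀ := dist_triangle _ _ _
        exact mem_closedBall.mpr (by linarith)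
      · exact circleMap_mem_sphere z zero_le_one θ
    calc ‖c1 θ * D x θ‖ = ‖c1 θ‖ * ‖D x θ‖ := norm_mul _ _
      _ = ‖D x θ‖ := by rw [hc1n θ, one_mul]
      _ ≤ M := hb
  · exact intervalIntegrable_const
  · filter_upwards with θ _
    intro x _
    exact (((slice_fst hf (circleMap z 1 θ)) x).hasDerivAt).const_mul (c1 θ)

lemma uq_formula {f : ℂ → ℂ → ℂ} (hf : Differentiable ℂ (fun p : ℂ × ℂ => f p.1 p.2))
    (q : ℕ) (z a : ℂ) :
    iteratedDeriv q (f a) z = (q.factorial : ℂ) *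
      ((2 * Real.pi * Complex.I : ℂ)⁻¹ •
        ∮ w in C(z, (1:ℝ)), ((1:ℂ) / (w - z)) ^ q • (w - z)⁻¹ • f a w) := by
  have hps := (slice_snd hf a).hasFPowerSeriesOnBall z (R := 1) one_pos
  have h2 := hps.factorial_smul (1 : ℂ) q
  rw [iteratedDeriv_eq_iteratedFDeriv, ← h2, cauchyPowerSeries_apply]
  rw [nsmul_eq_mul]
  norm_num

lemma uq_diff {f : ℂ → ℂ → ℂ} (hf : Differentiable ℂ (fun p : ℂ × ℂ => f p.1 p.2))
    (q : ℕ) (z : ℂ) :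
    Differentiable ℂ (fun a => iteratedDeriv q (f a) z) := by
  have h : (fun a => iteratedDeriv q (f a) z) = fun a => (q.factorial : ℂ) *
      ((2 * Real.pi * Complex.I : ℂ)⁻¹ •
        ∮ w in C(z, (1:ℝ)), ((1:ℂ) / (w - z)) ^ q • (w - z)⁻¹ • f a w) := by
    funext a
    exact uq_formula hf q z a
  rw [h]
  exact ((circle_integral_param_diff hf q z).const_smul ((2 * Real.pi * Complex.I : ℂ)⁻¹)).const_mul _

end RCHelpers

/-- The mixed partial derivative `∂^p/∂ζ₁^p ∂^q/∂ζ₂^q f` evaluated at `(z, z)`. -/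
noncomputable def pd (p q : ℕ) (f : ℂ → ℂ → ℂ) (z : ℂ) : ℂ :=
  iteratedDeriv p (fun a => iteratedDeriv q (f a) z) z

/-- The `ℓ`-th Rankin–Cohen bracket restricted to the diagonal:
`(R_ℓ f)(z) = ∑_{j=0}^{ℓ} (-1)^j (ℓ choose j)² ∂^ℓ f/∂ζ₁^{ℓ-j}∂ζ₂^j (z, z)`. -/
noncomputable def RC (ℓ : ℕ) (f : ℂ → ℂ → ℂ) (z : ℂ) : ℂ :=
  ∑ j ∈ Finset.range (ℓ + 1), (-1 : ℂ) ^ j * (ℓ.choose j : ℂ) ^ 2 * pd (ℓ - j) j f z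

/-- For entire `f`, `∂^{2ℓ}/(∂ζ₁^ℓ ∂ζ₂^ℓ)((ζ₁-ζ₂)^ℓ f)|_{ζ₁=ζ₂=ζ} = (-1)^ℓ ℓ! (R_ℓ f)(ζ)`. -/
theorem stmt_2 (f : ℂ → ℂ → ℂ) (hf : Differentiable ℂ (fun p : ℂ × ℂ => f p.1 p.2))
    (ℓ : ℕ) (ζ : ℂ) :
    pd ℓ ℓ (fun a b => (a - b) ^ ℓ * f a b) ζ =
      (-1 : ℂ) ^ ℓ * (ℓ.factorial : ℂ) * RC ℓ f ζ := by
  have hu : ∀ q, Differentiable ℂ (fun a : ℂ => iteratedDeriv q (f a) ζ) :=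
    fun q => uq_diff hf q ζ
  have hs2 : ∀ a, Differentiable ℂ (f a) := fun a => slice_snd hf a
  set G : ℕ → ℂ → ℂ := fun j a =>
    ((ℓ.choose j : ℂ) * ((-1 : ℂ) ^ j * (ℓ.descFactorial j : ℂ))) *
      ((a - ζ) ^ (ℓ - j) * iteratedDeriv (ℓ - j) (f a) ζ) with hG
  have hGdiff : ∀ j ∈ range (ℓ + 1), Differentiable ℂ (G j) := by
    intro j _
    exact (((differentiable_id.sub_const ζ).pow _).mul (hu (ℓ - j))).const_mul _
  have stepA : (fun a => iteratedDeriv ℓ (fun b => (a - b) ^ ℓ * f a b) ζ) =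
      fun a => ∑ j ∈ range (ℓ + 1), G j a := by
    funext a
    have hpoly : Differentiable ℂ (fun b : ℂ => (a - b) ^ ℓ) :=
      ((differentiable_const a).sub differentiable_id).pow ℓ
    refine (congrFun (leibniz _ _ hpoly (hs2 a) ℓ) ζ).trans ?_
    refine sum_congr rfl fun j hj => ?_
    simp only [hG, iteratedDeriv_const_sub_pow a ℓ j]
    ring
  have hmain : pd ℓ ℓ (fun a b => (a - b) ^ ℓ * f a b) ζ =
      ∑ j ∈ range (ℓ + 1), iteratedDeriv ℓ (G j) ζ := by
    show iteratedDeriv ℓ (fun a => iteratedDeriv ℓ (fun b => (a - b) ^ ℓ * f a b) ζ) ζ = _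
    rw [stepA]
    exact congrFun (iteratedDeriv_fun_sum' (range (ℓ + 1)) G hGdiff ℓ) ζ
  have hterm : ∀ j ∈ range (ℓ + 1), iteratedDeriv ℓ (G j) ζ =
      (-1 : ℂ) ^ j * (ℓ.choose j : ℂ) ^ 2 * (ℓ.factorial : ℂ) * pd j (ℓ - j) f ζ := by
    intro j hj
    have hjle : j ≤ ℓ := by have := mem_range.mp hj; omega
    have h1 : iteratedDeriv ℓ (G j) ζ =
        ((ℓ.choose j : ℂ) * ((-1 : ℂ) ^ j * (ℓ.descFactorial j : ℂ))) *
          iteratedDeriv ℓ (fun a => (a - ζ) ^ (ℓ - j) * iteratedDeriv (ℓ - j) (f a) ζ) ζ := by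
      simp only [hG]
      exact congrFun (iteratedDeriv_cmul (((differentiable_id.sub_const ζ).pow _).mul
        (hu (ℓ - j))) _ ℓ) ζ
    have h5 := collapse (fun a => iteratedDeriv (ℓ - j) (f a) ζ) (hu (ℓ - j)) ζ (ℓ - j) ℓ
      (Nat.sub_le ℓ j)
    beta_reduce at h5
    rw [h1, h5, Nat.sub_sub_self hjle, Nat.choose_symm hjle]
    have h4 : (ℓ.descFactorial j : ℂ) * (((ℓ - j).factorial : ℕ) : ℂ) = (ℓ.factorial : ℂ) := by
      have h6 : (ℓ - j).factorial * ℓ.descFactorial j = ℓ.factorial :=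
        Nat.factorial_mul_descFactorial hjle
      push_cast [← h6]
      ring
    have h3 : pd j (ℓ - j) f ζ = iteratedDeriv j (fun a => iteratedDeriv (ℓ - j) (f a) ζ) ζ := rfl
    rw [h3]
    linear_combination ((-1 : ℂ) ^ j * (ℓ.choose j : ℂ) ^ 2 *
      iteratedDeriv j (fun a => iteratedDeriv (ℓ - j) (f a) ζ) ζ) * h4
  rw [hmain, sum_congr rfl hterm]
  unfold RC
  rw [← sum_range_reflect (fun j => (-1 : ℂ) ^ j * (ℓ.choose j : ℂ) ^ 2 * pd (ℓ - j) j f ζ) (ℓ + 1)]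
  rw [Finset.mul_sum]
  refine sum_congr rfl fun j hj => ?_
  have hjle : j ≤ ℓ := by have := mem_range.mp hj; omega
  simp only [Nat.add_sub_cancel]
  rw [Nat.sub_sub_self hjle, Nat.choose_symm hjle]
  have hsign : ((-1 : ℂ)) ^ ℓ * ((-1 : ℂ)) ^ (ℓ - j) = ((-1 : ℂ)) ^ j := by
    rw [← pow_add]
    have h : ℓ + (ℓ - j) = j + 2 * (ℓ - j) := by omega
    rw [h, pow_add, pow_mul]
    simp
  linear_combination (-((ℓ.factorial : ℂ) * (ℓ.choose j : ℂ) ^ 2 * pd j (ℓ - j) f ζ)) * hsign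
end

section
/- For every ℓ ∈ ℕ, the Rankin–Cohen bracket applied to the function f(ζ₁,ζ₂) = (ζ₁-ζ₂)^ℓ (ζ₁+i)^{-ℓ-1} (ζ₂+i)^{-ℓ-1} satisfies (R_ℓ f)(ζ) = ((2ℓ)!/ℓ!) (ζ+i)^{-2ℓ-2}; in particular R_ℓ f is not identically zero. -/
open Finset

namespace Stmt12Aux

open Complex Filter

noncomputable def Fall (m : ℤ) (n : ℕ) : ℂ := ∏ i ∈ Finset.range n, ((m : ℂ) - i)

lemma Fall_zero (m : ℤ) : Fall m 0 = 1 := by simp [Fall]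

lemma Fall_succ (m : ℤ) (n : ℕ) : Fall m (n + 1) = Fall m n * ((m : ℂ) - n) := by
  simp [Fall, Finset.prod_range_succ]

lemma lemA {ι : Type*} (s : Finset ι) (c : ι → ℂ) (m : ι → ℤ) (n : ℕ) :
    ∀ z : ℂ, z ≠ -I →
    iteratedDeriv n (fun x => ∑ k ∈ s, c k * (x + I) ^ (m k)) z
      = ∑ k ∈ s, c k * Fall (m k) n * (z + I) ^ (m k - n) := by
  induction n with
  | zero => intro z hz; simp [Fall_zero]
  | succ n ih =>
    intro z hz
    have hz' : z + I ≠ 0 := fun h => hz (by linear_combination h)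
    have hev : iteratedDeriv n (fun x => ∑ k ∈ s, c k * (x + I) ^ (m k))
        =ᶠ[nhds z] fun w => ∑ k ∈ s, c k * Fall (m k) n * (w + I) ^ (m k - n) := by
      filter_upwards [compl_singleton_mem_nhds hz] with w hw
      exact ih w hw
    rw [iteratedDeriv_succ, hev.deriv_eq]
    have hd : ∀ k ∈ s, HasDerivAt (fun w : ℂ => c k * Fall (m k) n * (w + I) ^ (m k - n))
        (c k * Fall (m k) n * (((m k - n : ℤ) : ℂ) * (z + I) ^ (m k - n - 1))) z := by
      intro k _
      have h1 : HasDerivAt (fun w : ℂ => w + I) 1 z := (hasDerivAt_id z).add_const I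
      have h2 := hasDerivAt_zpow (m k - n) (z + I) (Or.inl hz')
      have h3 := h2.comp z h1
      simpa using h3.const_mul (c k * Fall (m k) n)
    rw [(HasDerivAt.fun_sum hd).deriv]
    refine Finset.sum_congr rfl fun k _ => ?_
    rw [Fall_succ]
    have he : m k - ((n : ℕ) + 1 : ℕ) = m k - n - 1 := by push_cast; ring
    rw [he]
    push_cast
    ring

lemma expand (ℓ : ℕ) {a b : ℂ} (ha : a ≠ -I) (hb : b ≠ -I) :
    (a - b) ^ ℓ * (a + I) ^ (-(ℓ : ℤ) - 1) * (b + I) ^ (-(ℓ : ℤ) - 1)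
      = ∑ k ∈ Finset.range (ℓ + 1),
          ((-1 : ℂ) ^ (ℓ - k) * (ℓ.choose k : ℂ) * (a + I) ^ ((k : ℤ) - ℓ - 1))
            * (b + I) ^ (-(k : ℤ) - 1) := by
  have ha' : a + I ≠ 0 := fun h => ha (by linear_combination h)
  have hb' : b + I ≠ 0 := fun h => hb (by linear_combination h)
  have h0 : a - b = (a + I) + (-(b + I)) := by ring
  rw [h0, add_pow, Finset.sum_mul, Finset.sum_mul]
  refine Finset.sum_congr rfl fun k hk => ?_
  have hk' : k ≤ ℓ := Nat.lt_succ_iff.mp (Finset.mem_range.mp hk)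
  have e1 : (a + I) ^ k * (a + I) ^ (-(ℓ : ℤ) - 1) = (a + I) ^ ((k : ℤ) - ℓ - 1) := by
    rw [← zpow_natCast (a + I) k, ← zpow_add₀ ha']
    congr 1; ring
  have e2 : (b + I) ^ (ℓ - k) * (b + I) ^ (-(ℓ : ℤ) - 1) = (b + I) ^ (-(k : ℤ) - 1) := by
    rw [← zpow_natCast (b + I) (ℓ - k), ← zpow_add₀ hb']
    congr 1
    push_cast [Nat.cast_sub hk']
    ring
  rw [neg_pow]
  calc (a + I) ^ k * ((-1 : ℂ) ^ (ℓ - k) * (b + I) ^ (ℓ - k)) * (ℓ.choose k : ℂ)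
        * (a + I) ^ (-(ℓ : ℤ) - 1) * (b + I) ^ (-(ℓ : ℤ) - 1)
      = (-1 : ℂ) ^ (ℓ - k) * (ℓ.choose k : ℂ)
          * ((a + I) ^ k * (a + I) ^ (-(ℓ : ℤ) - 1))
          * ((b + I) ^ (ℓ - k) * (b + I) ^ (-(ℓ : ℤ) - 1)) := by ring
    _ = _ := by rw [e1, e2]

lemma pd_eq (ℓ p q : ℕ) (hpq : p + q = ℓ) {z : ℂ} (hz : z ≠ -I) :
    pd p q (fun a b => (a - b) ^ ℓ * (a + Complex.I) ^ (-(ℓ : ℤ) - 1) *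
        (b + Complex.I) ^ (-(ℓ : ℤ) - 1)) z
      = (∑ k ∈ Finset.range (ℓ + 1), (-1 : ℂ) ^ (ℓ - k) * (ℓ.choose k : ℂ) *
            Fall ((k : ℤ) - ℓ - 1) p * Fall (-(k : ℤ) - 1) q)
          * (z + Complex.I) ^ (-2 * (ℓ : ℤ) - 2) := by
  have hz' : z + I ≠ 0 := fun h => hz (by linear_combination h)
  have step1 : ∀ a : ℂ, a ≠ -I →
      iteratedDeriv q (fun b => (a - b) ^ ℓ * (a + I) ^ (-(ℓ : ℤ) - 1) *
          (b + I) ^ (-(ℓ : ℤ) - 1)) z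
        = ∑ k ∈ Finset.range (ℓ + 1),
            ((-1 : ℂ) ^ (ℓ - k) * (ℓ.choose k : ℂ) * Fall (-(k : ℤ) - 1) q *
              (z + I) ^ (-(k : ℤ) - 1 - q)) * (a + I) ^ ((k : ℤ) - ℓ - 1) := by
    intro a ha
    have hev : (fun b => (a - b) ^ ℓ * (a + I) ^ (-(ℓ : ℤ) - 1) * (b + I) ^ (-(ℓ : ℤ) - 1))
        =ᶠ[nhds z] fun b => ∑ k ∈ Finset.range (ℓ + 1),
          ((-1 : ℂ) ^ (ℓ - k) * (ℓ.choose k : ℂ) * (a + I) ^ ((k : ℤ) - ℓ - 1))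
            * (b + I) ^ (-(k : ℤ) - 1) := by
      filter_upwards [compl_singleton_mem_nhds hz] with w hw
      exact expand ℓ ha hw
    rw [hev.iteratedDeriv_eq q,
      lemA (Finset.range (ℓ + 1))
        (fun k => (-1 : ℂ) ^ (ℓ - k) * (ℓ.choose k : ℂ) * (a + I) ^ ((k : ℤ) - ℓ - 1))
        (fun k => -(k : ℤ) - 1) q z hz]
    exact Finset.sum_congr rfl fun k _ => by ring
  have hev2 : (fun a => iteratedDeriv q (fun b => (a - b) ^ ℓ * (a + I) ^ (-(ℓ : ℤ) - 1) *
        (b + I) ^ (-(ℓ : ℤ) - 1)) z)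
      =ᶠ[nhds z] fun a => ∑ k ∈ Finset.range (ℓ + 1),
          ((-1 : ℂ) ^ (ℓ - k) * (ℓ.choose k : ℂ) * Fall (-(k : ℤ) - 1) q *
            (z + I) ^ (-(k : ℤ) - 1 - q)) * (a + I) ^ ((k : ℤ) - ℓ - 1) := by
    filter_upwards [compl_singleton_mem_nhds hz] with w hw
    exact step1 w hw
  unfold pd
  rw [hev2.iteratedDeriv_eq p,
    lemA (Finset.range (ℓ + 1))
      (fun k => (-1 : ℂ) ^ (ℓ - k) * (ℓ.choose k : ℂ) * Fall (-(k : ℤ) - 1) q *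
        (z + I) ^ (-(k : ℤ) - 1 - q))
      (fun k => (k : ℤ) - ℓ - 1) p z hz, Finset.sum_mul]
  refine Finset.sum_congr rfl fun k hk => ?_
  have hexp : (z + I) ^ (-(k : ℤ) - 1 - q) * (z + I) ^ ((k : ℤ) - ℓ - 1 - p)
      = (z + I) ^ (-2 * (ℓ : ℤ) - 2) := by
    rw [← zpow_add₀ hz']
    congr 1
    have : (p : ℤ) + q = ℓ := by exact_mod_cast hpq
    omega
  calc ((-1 : ℂ) ^ (ℓ - k) * (ℓ.choose k : ℂ) * Fall (-(k : ℤ) - 1) q *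
          (z + I) ^ (-(k : ℤ) - 1 - q)) * Fall ((k : ℤ) - ℓ - 1) p *
          (z + I) ^ ((k : ℤ) - ℓ - 1 - p)
      = ((-1 : ℂ) ^ (ℓ - k) * (ℓ.choose k : ℂ) * Fall ((k : ℤ) - ℓ - 1) p *
          Fall (-(k : ℤ) - 1) q) *
          ((z + I) ^ (-(k : ℤ) - 1 - q) * (z + I) ^ ((k : ℤ) - ℓ - 1 - p)) := by ring
    _ = _ := by rw [hexp]

noncomputable def pM (M : Multiset ℂ) (x : ℂ) : ℂ := (M.map (fun c => x - c)).prod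

lemma pM_zero (x : ℂ) : pM 0 x = 1 := by simp [pM]

lemma pM_cons (a : ℂ) (M : Multiset ℂ) (x : ℂ) : pM (a ::ₘ M) x = (x - a) * pM M x := by
  simp [pM]

lemma telescope (M : Multiset ℂ) : ∃ L : Multiset (Multiset ℂ),
    Multiset.card L = Multiset.card M ∧
    (∀ N ∈ L, Multiset.card N + 1 = Multiset.card M) ∧
    ∀ x : ℂ, pM M x - pM M (x + 1) = -(L.map (fun N => pM N x)).sum := by
  induction M using Multiset.induction with
  | empty => exact ⟨0, by simp, by simp, by simp [pM_zero]⟩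
  | cons a T ih =>
    obtain ⟨L, hc, hm, he⟩ := ih
    refine ⟨(L.map (fun N => a ::ₘ N)) + {T.map (fun c => c - 1)}, by simp [hc], ?_, ?_⟩
    · intro N hN
      rcases Multiset.mem_add.mp hN with h | h
      · obtain ⟨N', hN', rfl⟩ := Multiset.mem_map.mp h
        have := hm N' hN'
        simp only [Multiset.card_cons]
        omega
      · rw [Multiset.mem_singleton.mp h]
        simp
    · intro x
      have hshift : pM T (x + 1) = pM (T.map (fun c => c - 1)) x := by
        simp only [pM, Multiset.map_map, Function.comp]
        congr 1
        apply Multiset.map_congr rfl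
        intro c _
        ring
      have hsum : ((L.map (fun N => a ::ₘ N)).map (fun N => pM N x)).sum
          = (x - a) * (L.map (fun N => pM N x)).sum := by
        rw [Multiset.map_map]
        rw [← Multiset.sum_map_mul_left]
        apply congrArg
        apply Multiset.map_congr rfl
        intro N _
        simp [pM_cons]
      rw [pM_cons, pM_cons, Multiset.map_add, Multiset.sum_add, hsum,
        Multiset.map_singleton, Multiset.sum_singleton]
      linear_combination (x - a) * he x - hshift

lemma pascal_sum (n : ℕ) (f : ℕ → ℂ) :
    ∑ k ∈ Finset.range (n + 2), (-1 : ℂ) ^ k * ((n + 1).choose k : ℂ) * f k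
      = ∑ k ∈ Finset.range (n + 1), (-1 : ℂ) ^ k * (n.choose k : ℂ) * (f k - f (k + 1)) := by
  have hA : ∑ k ∈ Finset.range (n + 1), (-1 : ℂ) ^ k * (n.choose k : ℂ) * f k
      = (∑ i ∈ Finset.range (n + 1), (-1 : ℂ) ^ (i + 1) * (n.choose (i + 1) : ℂ) * f (i + 1))
        + f 0 := by
    rw [Finset.sum_range_succ' (fun k => (-1 : ℂ) ^ k * (n.choose k : ℂ) * f k) n]
    simp [Finset.sum_range_succ]
  simp only [mul_sub]
  rw [Finset.sum_sub_distrib, hA]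
  rw [Finset.sum_range_succ' (fun k => (-1 : ℂ) ^ k * ((n + 1).choose k : ℂ) * f k) (n + 1)]
  simp only [Nat.choose_succ_succ, Nat.cast_add]
  have hsplit : ∑ x ∈ Finset.range (n + 1),
        (-1 : ℂ) ^ (x + 1) * ((n.choose x : ℂ) + (n.choose (x + 1) : ℂ)) * f (x + 1)
      = ∑ x ∈ Finset.range (n + 1),
        ((-1 : ℂ) ^ (x + 1) * (n.choose (x + 1) : ℂ) * f (x + 1)
          - (-1 : ℂ) ^ x * (n.choose x : ℂ) * f (x + 1)) :=
    Finset.sum_congr rfl fun x _ => by ring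
  rw [hsplit, Finset.sum_sub_distrib]
  simp only [pow_zero, Nat.choose_zero_right, Nat.cast_one, one_mul, mul_one]
  ring

lemma swap_sum (s : Finset ℕ) (c : ℕ → ℂ) (L : Multiset (Multiset ℂ)) :
    ∑ k ∈ s, c k * (L.map (fun N => pM N (k : ℂ))).sum
      = (L.map (fun N => ∑ k ∈ s, c k * pM N (k : ℂ))).sum := by
  induction L using Multiset.induction with
  | empty => simp
  | cons a T ihL =>
    simp only [Multiset.map_cons, Multiset.sum_cons, mul_add, Finset.sum_add_distrib, ihL]

lemma key_sum : ∀ ℓ : ℕ, ∀ M : Multiset ℂ, Multiset.card M ≤ ℓ →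
    ∑ k ∈ Finset.range (ℓ + 1), (-1 : ℂ) ^ k * (ℓ.choose k : ℂ) * pM M k
      = if Multiset.card M = ℓ then (-1 : ℂ) ^ ℓ * (ℓ.factorial : ℂ) else 0 := by
  intro ℓ
  induction ℓ with
  | zero =>
    intro M hM
    have hM0 : M = 0 := Multiset.card_eq_zero.mp (Nat.le_zero.mp hM)
    subst hM0
    simp [pM_zero]
  | succ n ih =>
    intro M hM
    obtain ⟨L, hcard, hmem, hval⟩ := telescope M
    rw [show n + 1 + 1 = n + 2 from rfl, pascal_sum n (fun k => pM M (k : ℂ))]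
    have hterm : ∀ k ∈ Finset.range (n + 1),
        (-1 : ℂ) ^ k * (n.choose k : ℂ) * (pM M ((k : ℕ) : ℂ) - pM M (((k + 1 : ℕ) : ℕ) : ℂ))
          = -(((-1 : ℂ) ^ k * (n.choose k : ℂ)) * (L.map (fun N => pM N (k : ℂ))).sum) := by
      intro k _
      have h1 : (((k + 1 : ℕ)) : ℂ) = (k : ℂ) + 1 := by push_cast; ring
      rw [h1, hval (k : ℂ)]
      ring
    rw [Finset.sum_congr rfl hterm, Finset.sum_neg_distrib,
      swap_sum (Finset.range (n + 1)) (fun k => (-1 : ℂ) ^ k * (n.choose k : ℂ)) L]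
    have hIH : ∀ N ∈ L, (∑ k ∈ Finset.range (n + 1),
        ((-1 : ℂ) ^ k * (n.choose k : ℂ)) * pM N (k : ℂ))
          = if Multiset.card N = n then (-1 : ℂ) ^ n * (n.factorial : ℂ) else 0 := by
      intro N hN
      have h1 := hmem N hN
      exact ih N (by omega)
    by_cases hM' : Multiset.card M = n + 1
    · have hconst : ∀ N ∈ L, (∑ k ∈ Finset.range (n + 1),
          ((-1 : ℂ) ^ k * (n.choose k : ℂ)) * pM N (k : ℂ))
            = (-1 : ℂ) ^ n * (n.factorial : ℂ) := by
        intro N hN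
        rw [hIH N hN, if_pos (by have := hmem N hN; omega)]
      rw [Multiset.map_congr rfl hconst, Multiset.map_const', Multiset.sum_replicate,
        hcard, hM', if_pos rfl]
      simp only [nsmul_eq_mul, Nat.factorial_succ, pow_succ]
      push_cast
      ring
    · have hzero : ∀ N ∈ L, (∑ k ∈ Finset.range (n + 1),
          ((-1 : ℂ) ^ k * (n.choose k : ℂ)) * pM N (k : ℂ)) = 0 := by
        intro N hN
        rw [hIH N hN, if_neg (by have := hmem N hN; omega)]
      rw [Multiset.map_congr rfl hzero, if_neg hM']
      simp

lemma claimC (ℓ p q : ℕ) (hpq : p + q = ℓ) :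
    ∑ k ∈ Finset.range (ℓ + 1), (-1 : ℂ) ^ (ℓ - k) * (ℓ.choose k : ℂ) *
        Fall ((k : ℤ) - ℓ - 1) p * Fall (-(k : ℤ) - 1) q
      = (-1 : ℂ) ^ q * (ℓ.factorial : ℂ) := by
  set M : Multiset ℂ := (Multiset.range p).map (fun i => (ℓ : ℂ) + 1 + i)
      + (Multiset.range q).map (fun i => -(1 + (i : ℂ))) with hM
  have hcard : Multiset.card M = ℓ := by simp [hM, hpq]
  have hpMk : ∀ k : ℕ, pM M (k : ℂ)
      = (∏ i ∈ Finset.range p, ((k : ℂ) - ((ℓ : ℂ) + 1 + i)))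
        * ∏ i ∈ Finset.range q, ((k : ℂ) - (-(1 + (i : ℂ)))) := by
    intro k
    rw [hM]
    simp only [pM, Multiset.map_add, Multiset.prod_add, Multiset.map_map, Function.comp]
    rw [Finset.prod_eq_multiset_prod, Finset.prod_eq_multiset_prod]
    simp [Finset.range_val]
  have hprod : ∀ k : ℕ, Fall ((k : ℤ) - ℓ - 1) p * Fall (-(k : ℤ) - 1) q
      = (-1 : ℂ) ^ q * pM M (k : ℂ) := by
    intro k
    have h1 : Fall ((k : ℤ) - ℓ - 1) p
        = ∏ i ∈ Finset.range p, ((k : ℂ) - ((ℓ : ℂ) + 1 + i)) := by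
      unfold Fall
      refine Finset.prod_congr rfl fun i _ => ?_
      push_cast
      ring
    have h2 : Fall (-(k : ℤ) - 1) q
        = (-1 : ℂ) ^ q * ∏ i ∈ Finset.range q, ((k : ℂ) - (-(1 + (i : ℂ)))) := by
      unfold Fall
      have : ∀ i ∈ Finset.range q, ((((-(k : ℤ) - 1) : ℤ) : ℂ) - i)
          = -(((k : ℂ) - (-(1 + (i : ℂ))))) := by
        intro i _
        push_cast
        ring
      rw [Finset.prod_congr rfl this]
      simp only [neg_eq_neg_one_mul ((_ : ℂ) - _), Finset.prod_mul_distrib,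
        Finset.prod_const, Finset.card_range]
    rw [h1, h2, hpMk k]
    ring
  have hsum : ∑ k ∈ Finset.range (ℓ + 1), (-1 : ℂ) ^ (ℓ - k) * (ℓ.choose k : ℂ) *
        Fall ((k : ℤ) - ℓ - 1) p * Fall (-(k : ℤ) - 1) q
      = (-1 : ℂ) ^ ℓ * (-1 : ℂ) ^ q *
        ∑ k ∈ Finset.range (ℓ + 1), (-1 : ℂ) ^ k * (ℓ.choose k : ℂ) * pM M (k : ℂ) := by
    rw [Finset.mul_sum]
    refine Finset.sum_congr rfl fun k hk => ?_
    have hk' : k ≤ ℓ := Nat.lt_succ_iff.mp (Finset.mem_range.mp hk)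
    have hsign : (-1 : ℂ) ^ (ℓ - k) = (-1 : ℂ) ^ ℓ * (-1 : ℂ) ^ k := by
      have h3 : (-1 : ℂ) ^ (ℓ - k) * (-1 : ℂ) ^ k = (-1 : ℂ) ^ ℓ := by
        rw [← pow_add, Nat.sub_add_cancel hk']
      have h4 : (-1 : ℂ) ^ k * (-1 : ℂ) ^ k = 1 := by
        rw [← mul_pow]
        norm_num
      calc (-1 : ℂ) ^ (ℓ - k) = (-1 : ℂ) ^ (ℓ - k) * ((-1 : ℂ) ^ k * (-1 : ℂ) ^ k) := by
            rw [h4, mul_one]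
        _ = (-1 : ℂ) ^ ℓ * (-1 : ℂ) ^ k := by rw [← mul_assoc, h3]
    rw [mul_assoc, hprod k, hsign]
    ring
  rw [hsum, key_sum ℓ M hcard.le, if_pos hcard]
  have h4 : (-1 : ℂ) ^ ℓ * (-1 : ℂ) ^ ℓ = 1 := by
    rw [← mul_pow]; norm_num
  calc (-1 : ℂ) ^ ℓ * (-1 : ℂ) ^ q * ((-1 : ℂ) ^ ℓ * (ℓ.factorial : ℂ))
      = ((-1 : ℂ) ^ ℓ * (-1 : ℂ) ^ ℓ) * ((-1 : ℂ) ^ q * (ℓ.factorial : ℂ)) := by ring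
    _ = _ := by rw [h4, one_mul]

lemma sum_choose_sq (ℓ : ℕ) :
    ∑ j ∈ Finset.range (ℓ + 1), (ℓ.choose j) ^ 2 = (2 * ℓ).choose ℓ := by
  rw [two_mul, Nat.add_choose_eq, Finset.Nat.sum_antidiagonal_eq_sum_range_succ_mk]
  refine Finset.sum_congr rfl fun k hk => ?_
  have hk' : k ≤ ℓ := Nat.lt_succ_iff.mp (Finset.mem_range.mp hk)
  rw [Nat.choose_symm hk', sq]

end Stmt12Aux

open Stmt12Aux in
/-- For `f(ζ₁,ζ₂) = (ζ₁-ζ₂)^ℓ (ζ₁+i)^{-ℓ-1}(ζ₂+i)^{-ℓ-1}`, one has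
`(R_ℓ f)(ζ) = ((2ℓ)!/ℓ!) (ζ+i)^{-2ℓ-2} ≠ 0` away from `ζ = -i`. -/
theorem stmt_12 (ℓ : ℕ) (ζ : ℂ) (hζ : ζ ≠ -Complex.I) :
    RC ℓ (fun a b => (a - b) ^ ℓ * (a + Complex.I) ^ (-(ℓ : ℤ) - 1) *
        (b + Complex.I) ^ (-(ℓ : ℤ) - 1)) ζ =
      ((2 * ℓ).factorial : ℂ) / (ℓ.factorial : ℂ) * (ζ + Complex.I) ^ (-2 * (ℓ : ℤ) - 2) ∧
    RC ℓ (fun a b => (a - b) ^ ℓ * (a + Complex.I) ^ (-(ℓ : ℤ) - 1) *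
        (b + Complex.I) ^ (-(ℓ : ℤ) - 1)) ζ ≠ 0 := by
  have hζ' : ζ + Complex.I ≠ 0 := fun h => hζ (by linear_combination h)
  have hmain : RC ℓ (fun a b => (a - b) ^ ℓ * (a + Complex.I) ^ (-(ℓ : ℤ) - 1) *
        (b + Complex.I) ^ (-(ℓ : ℤ) - 1)) ζ =
      ((2 * ℓ).factorial : ℂ) / (ℓ.factorial : ℂ) * (ζ + Complex.I) ^ (-2 * (ℓ : ℤ) - 2) := by
    unfold RC
    have hterm : ∀ j ∈ Finset.range (ℓ + 1),
        (-1 : ℂ) ^ j * (ℓ.choose j : ℂ) ^ 2 *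
          pd (ℓ - j) j (fun a b => (a - b) ^ ℓ * (a + Complex.I) ^ (-(ℓ : ℤ) - 1) *
            (b + Complex.I) ^ (-(ℓ : ℤ) - 1)) ζ
        = (ℓ.choose j : ℂ) ^ 2 * (ℓ.factorial : ℂ) *
            (ζ + Complex.I) ^ (-2 * (ℓ : ℤ) - 2) := by
      intro j hj
      have hj' : j ≤ ℓ := Nat.lt_succ_iff.mp (Finset.mem_range.mp hj)
      rw [pd_eq ℓ (ℓ - j) j (Nat.sub_add_cancel hj') hζ, claimC ℓ (ℓ - j) j
        (Nat.sub_add_cancel hj')]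
      have h4 : (-1 : ℂ) ^ j * (-1 : ℂ) ^ j = 1 := by rw [← mul_pow]; norm_num
      calc (-1 : ℂ) ^ j * (ℓ.choose j : ℂ) ^ 2 *
            ((-1 : ℂ) ^ j * (ℓ.factorial : ℂ) * (ζ + Complex.I) ^ (-2 * (ℓ : ℤ) - 2))
          = ((-1 : ℂ) ^ j * (-1 : ℂ) ^ j) * ((ℓ.choose j : ℂ) ^ 2 * (ℓ.factorial : ℂ) *
              (ζ + Complex.I) ^ (-2 * (ℓ : ℤ) - 2)) := by ring
        _ = _ := by rw [h4, one_mul]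
    rw [Finset.sum_congr rfl hterm, ← Finset.sum_mul, ← Finset.sum_mul]
    have hsq : ∑ j ∈ Finset.range (ℓ + 1), (ℓ.choose j : ℂ) ^ 2
        = ((2 * ℓ).choose ℓ : ℂ) := by
      rw [← sum_choose_sq ℓ]
      push_cast
      rfl
    rw [hsq]
    have hfac : ((2 * ℓ).choose ℓ : ℂ) * (ℓ.factorial : ℂ)
        = ((2 * ℓ).factorial : ℂ) / (ℓ.factorial : ℂ) := by
      have h := Nat.choose_mul_factorial_mul_factorial (show ℓ ≤ 2 * ℓ by omega)
      have h2 : 2 * ℓ - ℓ = ℓ := by omega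
      rw [h2] at h
      have hne : (ℓ.factorial : ℂ) ≠ 0 := Nat.cast_ne_zero.mpr ℓ.factorial_ne_zero
      field_simp
      rw [← h]; push_cast; ring
    rw [hfac]
  refine ⟨hmain, ?_⟩
  rw [hmain]
  apply mul_ne_zero
  · apply div_ne_zero <;> exact Nat.cast_ne_zero.mpr (Nat.factorial_ne_zero _)
  · exact zpow_ne_zero _ hζ'
end
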